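/- arXiv:1412.1705 — 2 statements merged into one kernel-verified Lean document; each statement's English description precedes it below -/
import Mathlib

section
/- Let f : ℝ → ℝ be continuous and increasing, β ∈ (0,1], C, R > 0, and E ⊆ ℝ such that |f(x) - f(x+r)| ≤ C r^β for all x ∈ E and r ∈ [0, R). Let I = [a, b] be a closed interval with a = inf(E ∩ I'), b = sup(E ∩ I') for some set I' intersecting E, and suppose b - a < R. Then |f(b) - f(a)| ≤ C (b - a)^β. -/
theorem covering_interval_estimate (f : ℝ → ℝ) (β C R : ℝ) (E I' : Set ℝ) (a b : ℝ)
    (hβ0 : 0 < β) (hβ1 : β ≤ 1) (hC : 0 < C) (hR : 0 < R)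
    (hcont : Continuous f) (hmono : Monotone f)
    (hH : ∀ x ∈ E, ∀ r : ℝ, 0 ≤ r → r < R → |f x - f (x + r)| ≤ C * r ^ β)
    (hne : (E ∩ I').Nonempty)
    (ha : IsGLB (E ∩ I') a) (hb : IsLUB (E ∩ I') b)
    (hab : b - a < R) :
    |f b - f a| ≤ C * (b - a) ^ β := by
  obtain ⟨x0, hx0⟩ := hne
  have hab' : a ≤ b := le_trans (ha.1 hx0) (hb.1 hx0)
  have key : ∀ x ∈ E ∩ I', f b - f x ≤ C * (b - a) ^ β := by
    intro x hx
    have hax : a ≤ x := ha.1 hx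
    have hxb : x ≤ b := hb.1 hx
    have h1 : 0 ≤ b - x := by linarith
    have h2 : b - x < R := by linarith
    have := hH x hx.1 (b - x) h1 h2
    rw [show x + (b - x) = b by ring] at this
    have habs : f b - f x ≤ C * (b - x) ^ β := by
      have := abs_le.mp this
      linarith [this.1]
    refine habs.trans ?_
    have : (b - x) ^ β ≤ (b - a) ^ β :=
      Real.rpow_le_rpow h1 (by linarith) hβ0.le
    nlinarith
  have hcl : a ∈ {x | f b - f x ≤ C * (b - a) ^ β} := by
    have hclosed : IsClosed {x : ℝ | f b - f x ≤ C * (b - a) ^ β} :=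
      isClosed_le (by fun_prop) continuous_const
    have := hclosed.closure_subset
    exact this (closure_mono (fun x hx => key x hx) (ha.mem_closure ⟨x0, hx0⟩))
  have hfab : f a ≤ f b := hmono hab'
  rw [abs_of_nonneg (by linarith)]
  exact hcl
end

section
/- Let μ and ν be finite Borel measures on [0, T], β, δ > 0, and suppose there exist D > 0 and q > 0 such that for all n ∈ ℕ, E[ μ({ t ∈ [0,T] : ν([t, min(t + 2^{-n}, T)]) < 2^{β+δ} (2^{-n})^{β+δ} }) ] ≤ D 2^{-n q/2} · 2^{-nq/2} (i.e., the Markov bound P[μ(bad set at scale 2^{-n}) ≥ 2^{-nq/2}] ≤ D 2^{-nq/2} holds). Then, almost surely, for every Δ > 0 there exists N ∈ ℕ such that μ({ t ∈ [0,T] : ν([t, min(t+r, T)]) ≥ r^{β+δ} for all r ∈ [0, 2^{-N}) }) ≥ μ([0,T]) − Δ. -/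
/-!
Borel–Cantelli turns the summable Markov bounds into an almost sure eventual bound
`μ(bad set at scale 2⁻ⁿ) < 2^(-nq/2)`, so for almost every `ω` the `μ`-mass of the bad sets at all
scales finer than `2⁻ᴺ` is a tail of a convergent series and tends to `0`. Outside these bad sets
every radius `r < 2⁻ᴺ` lies in some `[2⁻⁽ⁿ⁺¹⁾, 2⁻ⁿ)` with `n ≥ N`, and monotonicity of
`r ↦ ν [t, t + r]` gives `ν [t, t + r] ≥ ν [t, t + 2⁻⁽ⁿ⁺¹⁾] ≥ (2 · 2⁻⁽ⁿ⁺¹⁾)^(β+δ) ≥ r^(β+δ)`.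
-/

open MeasureTheory ProbabilityTheory Filter Topology ENNReal

theorem ofReal_rpow_le_of_geometric_scales {g : ℝ → ℝ≥0∞} (hg : Monotone g) {ρ s : ℝ}
    (hρ₀ : 0 < ρ) (hρ₁ : ρ < 1) (hs : 0 < s) {N : ℕ}
    (hscale : ∀ n ≥ N, ENNReal.ofReal ((ρ ^ n) ^ s) ≤ g (ρ ^ (n + 1)))
    {r : ℝ} (hr₀ : 0 ≤ r) (hr : r < ρ ^ N) : ENNReal.ofReal (r ^ s) ≤ g r := by
  rcases hr₀.eq_or_lt with rfl | hr₀
  · simp [Real.zero_rpow hs.ne']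
  obtain ⟨n, hn_lt, hn_le⟩ := exists_nat_pow_near_of_lt_one hr₀
    (hr.le.trans (pow_le_one₀ hρ₀.le hρ₁.le)) hρ₀ hρ₁
  have hNn : N ≤ n :=
    Nat.lt_succ_iff.1 ((pow_lt_pow_iff_right_of_lt_one₀ hρ₀ hρ₁).1 (hn_lt.trans hr))
  calc ENNReal.ofReal (r ^ s) ≤ ENNReal.ofReal ((ρ ^ n) ^ s) :=
        ENNReal.ofReal_le_ofReal (Real.rpow_le_rpow hr₀.le hn_le hs.le)
    _ ≤ g (ρ ^ (n + 1)) := hscale n hNn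
    _ ≤ g r := hg hn_lt.le

theorem summable_rpow_neg_natCast_mul {b a : ℝ} (hb : 1 < b) (ha : 0 < a) :
    Summable fun n : ℕ => b ^ (-(n : ℝ) * a) := by
  have h : ∀ n : ℕ, b ^ (-(n : ℝ) * a) = (b ^ (-a)) ^ n := fun n => by
    rw [← Real.rpow_natCast, ← Real.rpow_mul (by linarith)]
    ring_nf
  simp_rw [h]
  exact summable_geometric_of_lt_one (by positivity)
    (Real.rpow_lt_one_of_one_lt_of_neg hb (neg_lt_zero.2 ha))

theorem ae_tendsto_tsum_nat_add_zero {Ω : Type*} [MeasurableSpace Ω] {P : Measure Ω}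
    {X : Ω → ℕ → ℝ≥0∞} {ε : ℕ → ℝ≥0∞} (hε : ∑' n, ε n ≠ ∞)
    (hX : ∑' n, P {ω | ε n ≤ X ω n} ≠ ∞) :
    ∀ᵐ ω ∂P, Tendsto (fun N => ∑' k, X ω (k + N)) atTop (𝓝 0) := by
  filter_upwards [ae_eventually_notMem hX] with ω hω
  obtain ⟨M, hM⟩ := eventually_atTop.1 hω
  refine tendsto_of_tendsto_of_tendsto_of_le_of_le' tendsto_const_nhds
    (ENNReal.tendsto_sum_nat_add ε hε) (Eventually.of_forall fun _ => zero_le) ?_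
  filter_upwards [eventually_ge_atTop M] with N hN
  exact ENNReal.tsum_le_tsum fun k => (not_le.1 (hM (k + N) (by omega))).le

def fastDecaySet (ν : Measure ℝ) (T s : ℝ) (n : ℕ) : Set ℝ :=
  {t ∈ Set.Icc 0 T | ν (Set.Icc t (min (t + (2:ℝ) ^ (-(n:ℝ))) T)) <
    ENNReal.ofReal ((2:ℝ) ^ s * ((2:ℝ) ^ (-(n:ℝ))) ^ s)}

def lowerRegularSet (ν : Measure ℝ) (T s : ℝ) (N : ℕ) : Set ℝ :=
  {t ∈ Set.Icc 0 T | ∀ r : ℝ, 0 ≤ r → r < (2:ℝ) ^ (-(N:ℝ)) →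
    ENNReal.ofReal (r ^ s) ≤ ν (Set.Icc t (min (t + r) T))}

theorem two_rpow_neg_natCast (n : ℕ) : (2:ℝ) ^ (-(n:ℝ)) = 2⁻¹ ^ n := by
  rw [Real.rpow_neg zero_le_two, Real.rpow_natCast, inv_pow]

theorem two_rpow_mul_two_rpow_neg_succ_rpow (s : ℝ) (n : ℕ) :
    (2:ℝ) ^ s * ((2:ℝ) ^ (-((n + 1 : ℕ) : ℝ))) ^ s = ((2⁻¹ : ℝ) ^ n) ^ s := by
  rw [two_rpow_neg_natCast, ← Real.mul_rpow zero_le_two (by positivity), pow_succ]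
  ring_nf

theorem Icc_subset_lowerRegularSet_union_fastDecaySet (ν : Measure ℝ) (T : ℝ) {s : ℝ}
    (hs : 0 < s) (N : ℕ) :
    Set.Icc 0 T ⊆ lowerRegularSet ν T s N ∪ ⋃ k, fastDecaySet ν T s (k + (N + 1)) := by
  intro t ht
  by_cases hbad : t ∈ ⋃ k, fastDecaySet ν T s (k + (N + 1))
  · exact Or.inr hbad
  refine Or.inl ⟨ht, fun r hr₀ hr => ?_⟩
  simp only [Set.mem_iUnion, not_exists] at hbad
  have hmono : Monotone fun r => ν (Set.Icc t (min (t + r) T)) := fun a b hab =>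
    measure_mono (Set.Icc_subset_Icc_right (min_le_min_right _ (by linarith)))
  rw [two_rpow_neg_natCast] at hr
  refine ofReal_rpow_le_of_geometric_scales hmono (by norm_num) (by norm_num) hs
    (fun n hn => ?_) hr₀ hr
  have hgood := hbad (n - N)
  rw [show n - N + (N + 1) = n + 1 by omega] at hgood
  rw [fastDecaySet, two_rpow_mul_two_rpow_neg_succ_rpow, two_rpow_neg_natCast] at hgood
  exact not_lt.1 fun h => hgood ⟨ht, h⟩

theorem borel_cantelli_scale_interpolation_general {Ω : Type*} [MeasureSpace Ω]
    (T β δ : ℝ) (hβ : 0 < β) (hδ : 0 < δ)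
    (μ ν : Ω → Measure ℝ)
    (D q : ℝ) (hq : 0 < q)
    (hmarkov : ∀ n : ℕ,
      ℙ {ω | ENNReal.ofReal ((2:ℝ) ^ (-(n:ℝ) * q / 2)) ≤
          μ ω {t ∈ Set.Icc 0 T |
            ν ω (Set.Icc t (min (t + (2:ℝ) ^ (-(n:ℝ))) T)) <
              ENNReal.ofReal ((2:ℝ) ^ (β + δ) * ((2:ℝ) ^ (-(n:ℝ))) ^ (β + δ))}}
        ≤ ENNReal.ofReal (D * (2:ℝ) ^ (-(n:ℝ) * q / 2))) :
    ∀ᵐ ω ∂(ℙ : Measure Ω), ∀ Δ : ℝ, 0 < Δ → ∃ N : ℕ,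
      μ ω (Set.Icc 0 T) ≤
        μ ω {t ∈ Set.Icc 0 T | ∀ r : ℝ, 0 ≤ r → r < (2:ℝ) ^ (-(N:ℝ)) →
            ENNReal.ofReal (r ^ (β + δ)) ≤ ν ω (Set.Icc t (min (t + r) T))}
          + ENNReal.ofReal Δ := by
  have hsummable : Summable fun n : ℕ => (2:ℝ) ^ (-(n:ℝ) * q / 2) := by
    simpa only [mul_div_assoc] using summable_rpow_neg_natCast_mul one_lt_two (half_pos hq)
  have hBC := ae_tendsto_tsum_nat_add_zero
    (X := fun ω n => μ ω (fastDecaySet (ν ω) T (β + δ) n)) hsummable.tsum_ofReal_ne_top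
    (ne_top_of_le_ne_top (hsummable.mul_left D).tsum_ofReal_ne_top
      (ENNReal.tsum_le_tsum hmarkov))
  filter_upwards [hBC] with ω hω Δ hΔ
  obtain ⟨N, hN⟩ := eventually_atTop.1 (hω.eventually (gt_mem_nhds (ENNReal.ofReal_pos.2 hΔ)))
  refine ⟨N, ?_⟩
  calc μ ω (Set.Icc 0 T)
      ≤ μ ω (lowerRegularSet (ν ω) T (β + δ) N ∪
          ⋃ k, fastDecaySet (ν ω) T (β + δ) (k + (N + 1))) :=
        measure_mono (Icc_subset_lowerRegularSet_union_fastDecaySet _ _ (add_pos hβ hδ) N)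
    _ ≤ μ ω (lowerRegularSet (ν ω) T (β + δ) N) +
          ∑' k, μ ω (fastDecaySet (ν ω) T (β + δ) (k + (N + 1))) :=
        (measure_union_le _ _).trans (add_le_add le_rfl (measure_iUnion_le _))
    _ ≤ μ ω (lowerRegularSet (ν ω) T (β + δ) N) + ENNReal.ofReal Δ :=
        add_le_add le_rfl (hN (N + 1) N.le_succ).le

theorem borel_cantelli_scale_interpolation {Ω : Type*} [MeasureSpace Ω]
    [IsProbabilityMeasure (ℙ : Measure Ω)]
    (T β δ : ℝ) (hT : 0 ≤ T) (hβ : 0 < β) (hδ : 0 < δ)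
    (μ ν : Ω → Measure ℝ)
    (hfin : ∀ ω, μ ω (Set.Icc 0 T) < ⊤)
    (D q : ℝ) (hD : 0 < D) (hq : 0 < q)
    (hmarkov : ∀ n : ℕ,
      ℙ {ω | ENNReal.ofReal ((2:ℝ) ^ (-(n:ℝ) * q / 2)) ≤
          μ ω {t ∈ Set.Icc 0 T |
            ν ω (Set.Icc t (min (t + (2:ℝ) ^ (-(n:ℝ))) T)) <
              ENNReal.ofReal ((2:ℝ) ^ (β + δ) * ((2:ℝ) ^ (-(n:ℝ))) ^ (β + δ))}}
        ≤ ENNReal.ofReal (D * (2:ℝ) ^ (-(n:ℝ) * q / 2))) :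
    ∀ᵐ ω ∂(ℙ : Measure Ω), ∀ Δ : ℝ, 0 < Δ → ∃ N : ℕ,
      μ ω (Set.Icc 0 T) ≤
        μ ω {t ∈ Set.Icc 0 T | ∀ r : ℝ, 0 ≤ r → r < (2:ℝ) ^ (-(N:ℝ)) →
            ENNReal.ofReal (r ^ (β + δ)) ≤ ν ω (Set.Icc t (min (t + r) T))}
          + ENNReal.ofReal Δ :=
  borel_cantelli_scale_interpolation_general T β δ hβ hδ μ ν D q hq hmarkov
end
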